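/- arXiv:2509.08460 — 2 statements merged into one kernel-verified Lean document; each statement's English description precedes it below -/
import Mathlib

section
/- If the defender satisfies J(l_a, l_d, φ) > 0 (i.e., lies strictly in the defender-win region), then the attacker's Apollonius disk does not intersect the defense line: l_p − R_AC > 0 where l_p is the distance of the Apollonius center to the line and R_AC its radius. -/
/-! Clearing the common denominator gives `l_p - R_AC = J / (1 - α²)`, and `1 - α² > 0`. -/

theorem apollonius_clearance_eq {K : Type*} [Field K] (α l_a l_d s : K) :
    (α ^ 2 * l_d + l_a) / (1 - α ^ 2) - α / (1 - α ^ 2) * ((l_a + l_d) / s) =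
      (l_a * (1 - α / s) - l_d * (α / s - α ^ 2)) / (1 - α ^ 2) := by
  ring

theorem defender_win_disk_disjoint_general (α l_a l_d φ : ℝ)
    (hα : 0 < α) (hα1 : α < 1)
    (l_p R_AC : ℝ)
    (hlp : l_p = (α ^ 2 * l_d + l_a) / (1 - α ^ 2))
    (hR : R_AC = α / (1 - α ^ 2) * ((l_a + l_d) / Real.sin φ))
    (hJ : l_a * (1 - α / Real.sin φ) - l_d * (α / Real.sin φ - α ^ 2) > 0) :
    l_p - R_AC > 0 := by
  have hα_sq : α ^ 2 < 1 := pow_lt_one₀ hα.le hα1 two_ne_zero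
  rw [hlp, hR, apollonius_clearance_eq]
  exact div_pos hJ (sub_pos.mpr hα_sq)

/-- If the defender lies strictly in the defender-win region (`J > 0`), the
attacker's Apollonius disk does not intersect the defense line: `l_p - R_AC > 0`. -/
theorem defender_win_disk_disjoint (α l_a l_d φ : ℝ)
    (hα : 0 < α) (hα1 : α < 1) (hla : 0 < l_a) (hld : 0 < l_d)
    (hφ : φ ∈ Set.Ioo (0 : ℝ) Real.pi)
    (l_p R_AC : ℝ)
    (hlp : l_p = (α ^ 2 * l_d + l_a) / (1 - α ^ 2))
    (hR : R_AC = α / (1 - α ^ 2) * ((l_a + l_d) / Real.sin φ))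
    (hJ : l_a * (1 - α / Real.sin φ) - l_d * (α / Real.sin φ - α ^ 2) > 0) :
    l_p - R_AC > 0 :=
  defender_win_disk_disjoint_general α l_a l_d φ hα hα1 l_p R_AC hlp hR hJ
end

section
/- Define l_Ξ(η) = (1/(1−α²))·(ε_D − ε_P cos η − α·√(ε_P² + ε_D² − 2 ε_P ε_D cos η)) for η ∈ [0, λ/2] with 0 < λ/2 < π/2. Then the derivative dl_Ξ/dη vanishes only when sin η = 0 or cos η = (ε_P² + (1−α²)ε_D²)/(2 ε_P ε_D); consequently the minimum of l_Ξ over [0, λ/2] is attained at η = 0, η = λ/2, or at η* = arccos((ε_P² + (1−α²)ε_D²)/(2 ε_P ε_D)) if this value lies in [0, λ/2]. -/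
/-!
The derivative of `l_Ξ` factors as `εP sin η (1 - α εD / √Q(η)) / (1 - α²)`, where
`Q(η) = εP² + εD² - 2 εP εD cos η ≥ (εD - εP)² > 0`. It thus vanishes
only where `sin η = 0` or `Q(η) = α² εD²`, and the latter solves to the stated value of `cos η`.
The minimum of the continuous `l_Ξ` on the compact interval is attained either at an endpoint or
at an interior critical point; there `sin η > 0` since `λ/2 < π/2`, so `η = arccos (cos η)` is `η*`.
-/

open Real Set

theorem exists_isMinOn_Icc_eq_left_or_eq_right_or_deriv_eq_zero {f : ℝ → ℝ} {a b : ℝ}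
    (hab : a ≤ b) (hf : ContinuousOn f (Icc a b)) :
    ∃ x ∈ Icc a b, IsMinOn f (Icc a b) x ∧ (x = a ∨ x = b ∨ (x ∈ Ioo a b ∧ deriv f x = 0)) := by
  obtain ⟨x, hx, hmin⟩ := isCompact_Icc.exists_isMinOn (nonempty_Icc.2 hab) hf
  refine ⟨x, hx, hmin, ?_⟩
  rcases hx.1.eq_or_lt with rfl | hax
  · exact Or.inl rfl
  rcases hx.2.eq_or_lt with rfl | hxb
  · exact Or.inr (Or.inl rfl)
  exact Or.inr (Or.inr ⟨⟨hax, hxb⟩, (hmin.isLocalMin (Icc_mem_nhds hax hxb)).deriv_eq_zero⟩)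

noncomputable def cosineLawSq (a b η : ℝ) : ℝ := a ^ 2 + b ^ 2 - 2 * a * b * cos η

theorem cosineLawSq_pos {a b : ℝ} (hab : 0 ≤ a * b) (hne : a ≠ b) (η : ℝ) :
    0 < cosineLawSq a b η := by
  have hsq : 0 < (a - b) ^ 2 := by positivity [sub_ne_zero.2 hne]
  unfold cosineLawSq
  nlinarith [cos_le_one η]

theorem hasDerivAt_cosineLawSq (a b η : ℝ) :
    HasDerivAt (cosineLawSq a b) (2 * a * b * sin η) η := by
  exact (((hasDerivAt_cos η).const_mul (2 * a * b)).const_sub (a ^ 2 + b ^ 2)).congr_deriv (by ring)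

theorem cos_eq_of_sqrt_cosineLawSq_eq {a b c η : ℝ} (hQ : 0 ≤ cosineLawSq a b η)
    (hab : a * b ≠ 0) (h : √(cosineLawSq a b η) = c * b) :
    cos η = (a ^ 2 + (1 - c ^ 2) * b ^ 2) / (2 * a * b) := by
  have hsq : cosineLawSq a b η = (c * b) ^ 2 := by rw [← h, sq_sqrt hQ]
  unfold cosineLawSq at hsq
  rw [eq_div_iff (by simpa [mul_assoc] using hab)]
  linear_combination -hsq

/-- The paper's `l_Ξ(η)`. -/
noncomputable def barrierDist (α εP εD η : ℝ) : ℝ :=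
  1 / (1 - α ^ 2) * (εD - εP * cos η - α * √(cosineLawSq εP εD η))

section barrierDist

variable {α εP εD : ℝ}

theorem continuous_barrierDist : Continuous (barrierDist α εP εD) := by
  unfold barrierDist cosineLawSq
  fun_prop

theorem hasDerivAt_barrierDist {η : ℝ} (hQ : 0 < cosineLawSq εP εD η) :
    HasDerivAt (barrierDist α εP εD)
      (1 / (1 - α ^ 2) * (εP * sin η * (1 - α * εD / √(cosineLawSq εP εD η)))) η := by
  have hsqrt := (hasDerivAt_sqrt hQ.ne').comp η (hasDerivAt_cosineLawSq εP εD η)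
  have hinner := (((hasDerivAt_cos η).const_mul εP).const_sub εD).sub (hsqrt.const_mul α)
  refine (hinner.const_mul (1 / (1 - α ^ 2))).congr_deriv ?_
  have : √(cosineLawSq εP εD η) ≠ 0 := (sqrt_pos.2 hQ).ne'
  field_simp

theorem sin_eq_zero_or_cos_eq_of_deriv_barrierDist_eq_zero {η : ℝ} (hα : α ^ 2 ≠ 1)
    (hεPD : εP * εD ≠ 0) (hQ : 0 < cosineLawSq εP εD η)
    (hd : deriv (barrierDist α εP εD) η = 0) :
    sin η = 0 ∨ cos η = (εP ^ 2 + (1 - α ^ 2) * εD ^ 2) / (2 * εP * εD) := by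
  rw [(hasDerivAt_barrierDist hQ).deriv] at hd
  have hα' : 1 / (1 - α ^ 2) ≠ 0 := one_div_ne_zero (sub_ne_zero.2 (Ne.symm hα))
  have hεP : εP ≠ 0 := left_ne_zero_of_mul hεPD
  have hsqrt : √(cosineLawSq εP εD η) ≠ 0 := (sqrt_pos.2 hQ).ne'
  simp only [mul_eq_zero, hα', hεP, false_or, sub_eq_zero] at hd
  refine hd.imp_right fun h => cos_eq_of_sqrt_cosineLawSq_eq hQ.le hεPD ?_
  rw [eq_div_iff hsqrt] at h
  linarith

end barrierDist

/-- Appendix B, eqs. (37)–(41): the stationary points of the critical barrier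
distance `l_Ξ(η)` on `[0, λ/2]`, and the location of its minimum. -/
theorem lXi_min_characterization (α εP εD lam : ℝ)
    (hα : 0 < α) (hα1 : α < 1) (hεP : 0 < εP) (hεD : εP < εD)
    (hlam : 0 < lam / 2) (hlam2 : lam / 2 < Real.pi / 2)
    (lXi : ℝ → ℝ)
    (hlXi : ∀ η, lXi η = 1 / (1 - α ^ 2) *
      (εD - εP * Real.cos η -
        α * Real.sqrt (εP ^ 2 + εD ^ 2 - 2 * εP * εD * Real.cos η))) :
    (∀ η ∈ Set.Icc (0 : ℝ) (lam / 2), deriv lXi η = 0 →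
        Real.sin η = 0 ∨
          Real.cos η = (εP ^ 2 + (1 - α ^ 2) * εD ^ 2) / (2 * εP * εD)) ∧
    (∃ η₀ ∈ Set.Icc (0 : ℝ) (lam / 2),
        (η₀ = 0 ∨ η₀ = lam / 2 ∨
          η₀ = Real.arccos ((εP ^ 2 + (1 - α ^ 2) * εD ^ 2) / (2 * εP * εD))) ∧
        ∀ η ∈ Set.Icc (0 : ℝ) (lam / 2), lXi η₀ ≤ lXi η) := by
  obtain rfl : lXi = barrierDist α εP εD := funext hlXi
  have hεPD : 0 < εP * εD := mul_pos hεP (hεP.trans hεD)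
  have hα2 : α ^ 2 ≠ 1 := by nlinarith
  have hcrit : ∀ η ∈ Icc (0 : ℝ) (lam / 2), deriv (barrierDist α εP εD) η = 0 →
      sin η = 0 ∨ cos η = (εP ^ 2 + (1 - α ^ 2) * εD ^ 2) / (2 * εP * εD) := fun η _ =>
    sin_eq_zero_or_cos_eq_of_deriv_barrierDist_eq_zero hα2 hεPD.ne'
      (cosineLawSq_pos hεPD.le hεD.ne η)
  refine ⟨hcrit, ?_⟩
  obtain ⟨η₀, hη₀, hmin, hend⟩ := exists_isMinOn_Icc_eq_left_or_eq_right_or_deriv_eq_zero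
    hlam.le continuous_barrierDist.continuousOn
  refine ⟨η₀, hη₀, ?_, fun η hη => hmin hη⟩
  rcases hend with h | h | ⟨hint, hd⟩
  · exact Or.inl h
  · exact Or.inr (Or.inl h)
  have hsin : sin η₀ ≠ 0 := (sin_pos_of_pos_of_lt_pi hint.1 (by linarith [pi_pos, hint.2])).ne'
  rw [← (hcrit η₀ hη₀ hd).resolve_left hsin, arccos_cos hint.1.le (by linarith [pi_pos, hint.2])]
  exact Or.inr (Or.inr rfl)
end
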